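/- Let f = (f₁,…,f_N) ∈ ℂ[x₁,…,xₙ]^N, ξ* ∈ ℂⁿ, and let B = {(x−ξ*)^{β₁},…,(x−ξ*)^{β_μ}} be closed under division with β₁ = 0. Let Λ* = {Λ*₁,…,Λ*_μ} ⊂ ℂ[d_{ξ*}] be dual to B, with Λ*₁ = 1, such that D* = span(Λ*) is stable under each derivation ∂_{d_k}. Define ε*_{i,j} := Λ*_j(f_i) and the perturbed system f_{i,ε*} := f_i − Σ_{j=1}^μ ε*_{i,j} (x−ξ*)^{β_j} for i = 1,…,N. Then: (1) Λ*_j(f_{i,ε*}) = 0 for all i = 1,…,N and j = 1,…,μ, so every element of D* vanishes on the ideal (f_{1,ε*},…,f_{N,ε*}); (2) if moreover D* is complete for f_{ε*} at ξ* (every Δ ∈ ℂ[d_{ξ*}] with ∂_{d_k}(Δ) ∈ D* for all k and Δ(f_{i,ε*}) = 0 for all i lies in D*), then D* = (f_{ε*})^⊥ ∩ ℂ[d_{ξ*}], i.e., ξ* is an isolated root of the perturbed system f_{ε*} of multiplicity exactly μ with inverse system D*. -/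

import Mathlib

/-!
The key identity is `Λ((x_k - ξ_k) p) = (∂Λ/∂d_k)(p)`, a consequence of Leibniz's rule
`∂^β((x_k - ξ_k) p) = (x_k - ξ_k) ∂^β p + β_k ∂^(β - e_k) p` evaluated at `ξ`.
Part (1) is biorthogonality: `f_{i,ε*}` is `f_i` minus its projection onto `span B` along `Λ*`.
Since `D*` is stable under the `∂/∂d_k`, the key identity makes the annihilator of `D*` in
`ℂ[x]` an ideal; it contains the `f_{i,ε*}`, hence `(f_{ε*})`. Conversely the functionals
annihilating `(f_{ε*})` are stable under the `∂/∂d_k`, which lower the degree, so completeness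
puts each of them in `D*` by induction on the degree.
-/

open MvPolynomial

/-- Total degree `|β|` of an exponent vector `β ∈ ℕⁿ`. -/
def mdeg {n : ℕ} (a : Fin n →₀ ℕ) : ℕ := ∑ i, a i

/-- Iterated partial derivative `∂^β p`. -/
noncomputable def pdiff {n : ℕ} (β : Fin n →₀ ℕ) (p : MvPolynomial (Fin n) ℂ) :
    MvPolynomial (Fin n) ℂ :=
  (List.finRange n).foldr (fun i q => (fun r => pderiv i r)^[β i] q) p

/-- The linear functional on `ℂ[x]` attached to the dual polynomial `Λ ∈ ℂ[d_ξ]`: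
`Λ(p) = Σ_β coeff_β(Λ) • (∂^β p)(ξ)`. -/
noncomputable def dapply {n : ℕ} (ξ : Fin n → ℂ) (Λ p : MvPolynomial (Fin n) ℂ) : ℂ :=
  ∑ β ∈ Λ.support, coeff β Λ * eval ξ (pdiff β p)

/-- The shifted monomial `(x-ξ)^β`. -/
noncomputable def xpow {n : ℕ} (ξ : Fin n → ℂ) (β : Fin n →₀ ℕ) : MvPolynomial (Fin n) ℂ :=
  ∏ i, (X i - C (ξ i)) ^ β i

/-- `∫ᵏΛ`: substitute `0` for `d_{k+1},…,d_n` in `Λ` and take the antiderivative with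
respect to `d_k` having no constant term. -/
noncomputable def integ {n : ℕ} (k : Fin n) (Λ : MvPolynomial (Fin n) ℂ) :
    MvPolynomial (Fin n) ℂ :=
  let Λ' := aeval (fun i => if i ≤ k then X i else 0) Λ
  ∑ β ∈ Λ'.support, monomial (β + Finsupp.single k 1) (coeff β Λ' / ((β k : ℂ) + 1))

/-- The maximal ideal `m_ξ` of polynomials vanishing at `ξ`. -/
noncomputable def mIdeal {n : ℕ} (ξ : Fin n → ℂ) : Ideal (MvPolynomial (Fin n) ℂ) :=
  RingHom.ker (eval ξ)

/-- `β! = β₁!⋯βₙ!`. -/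
def ffact {n : ℕ} (a : Fin n →₀ ℕ) : ℕ := ∏ i, (a i).factorial

theorem MvPolynomial.totalDegree_pderiv_lt {σ R : Type*} [CommSemiring R] {p : MvPolynomial σ R}
    {i : σ} (h : pderiv i p ≠ 0) : (pderiv i p).totalDegree < p.totalDegree := by
  have hlt : ∀ m ∈ (pderiv i p).support, (m.sum fun _ e => e) < p.totalDegree := by
    intro m hm
    rw [mem_support_iff, coeff_pderiv] at hm
    have hle := le_totalDegree (mem_support_iff.2 (left_ne_zero_of_mul hm))
    rw [Finsupp.sum_add_index' (fun _ => rfl) fun _ _ _ => rfl,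
      Finsupp.sum_single_index rfl] at hle
    omega
  obtain ⟨m, hm⟩ := support_nonempty.2 h
  exact (Finset.sup_lt_iff ((Nat.zero_le _).trans_lt (hlt m hm))).2 hlt

section IteratedPartialDerivatives

variable {σ R : Type*} [CommRing R]

theorem pderiv_pow_X_sub_C_mul_of_ne {i k : σ} (h : i ≠ k) (c : R) (m : ℕ)
    (p : MvPolynomial σ R) :
    ((pderiv i).toLinearMap ^ m) ((X k - C c) * p)
      = (X k - C c) * ((pderiv i).toLinearMap ^ m) p := by
  induction m with
  | zero => rfl
  | succ m ih =>
    rw [pow_succ', Module.End.mul_apply, ih, Module.End.mul_apply, Derivation.coeFn_coe,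
      pderiv_mul, map_sub, pderiv_X_of_ne h.symm, pderiv_C, sub_zero, zero_mul, zero_add]

theorem pderiv_pow_succ_X_sub_C_mul_self (k : σ) (c : R) (m : ℕ) (p : MvPolynomial σ R) :
    ((pderiv k).toLinearMap ^ (m + 1)) ((X k - C c) * p)
      = (X k - C c) * ((pderiv k).toLinearMap ^ (m + 1)) p
        + ((m + 1 : ℕ) : R) • ((pderiv k).toLinearMap ^ m) p := by
  induction m with
  | zero => simp [add_comm]
  | succ m ih =>
    rw [pow_succ' _ (m + 1), Module.End.mul_apply, ih, map_add, map_smul, Derivation.coeFn_coe,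
      pderiv_mul, map_sub, pderiv_X_self, pderiv_C, sub_zero, one_mul]
    simp only [pow_succ' _ m, Module.End.mul_apply, Derivation.coeFn_coe]
    push_cast
    module

theorem pderiv_pow_X_sub_C_mul_self (k : σ) (c : R) (m : ℕ) (p : MvPolynomial σ R) :
    ((pderiv k).toLinearMap ^ m) ((X k - C c) * p)
      = (X k - C c) * ((pderiv k).toLinearMap ^ m) p
        + (m : R) • ((pderiv k).toLinearMap ^ (m - 1)) p := by
  cases m with
  | zero => simp
  | succ m => exact pderiv_pow_succ_X_sub_C_mul_self k c m p

end IteratedPartialDerivatives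

section PdiffAlong

variable {σ R : Type*} [CommRing R]

/-- `∂^β` restricted to the variables listed in `l`, applied from the last one to the first;
`pdiff β` is the case `l = List.finRange n`. -/
noncomputable def pdiffAlong (l : List σ) (β : σ →₀ ℕ) :
    MvPolynomial σ R →ₗ[R] MvPolynomial σ R :=
  l.foldr (fun i L => (pderiv i).toLinearMap ^ β i * L) 1

theorem pdiffAlong_cons (i : σ) (l : List σ) (β : σ →₀ ℕ) :
    pdiffAlong (R := R) (i :: l) β = (pderiv i).toLinearMap ^ β i * pdiffAlong l β := rfl

theorem pdiffAlong_congr {l : List σ} {β γ : σ →₀ ℕ} (h : ∀ i ∈ l, β i = γ i) :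
    pdiffAlong (R := R) l β = pdiffAlong l γ := by
  induction l with
  | nil => rfl
  | cons i l ih =>
    rw [pdiffAlong_cons, pdiffAlong_cons, h i List.mem_cons_self,
      ih fun j hj => h j (List.mem_cons_of_mem i hj)]

theorem pdiffAlong_X_sub_C_mul_of_notMem {l : List σ} {k : σ} (hk : k ∉ l) (β : σ →₀ ℕ)
    (c : R) (p : MvPolynomial σ R) :
    pdiffAlong l β ((X k - C c) * p) = (X k - C c) * pdiffAlong l β p := by
  induction l with
  | nil => rfl
  | cons i l ih =>
    rw [List.mem_cons, not_or] at hk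
    rw [pdiffAlong_cons, Module.End.mul_apply, ih hk.2,
      pderiv_pow_X_sub_C_mul_of_ne (Ne.symm hk.1)]
    rfl

theorem pdiffAlong_X_sub_C_mul {l : List σ} (hl : l.Nodup) {k : σ} (hk : k ∈ l)
    (β : σ →₀ ℕ) (c : R) (p : MvPolynomial σ R) :
    pdiffAlong l β ((X k - C c) * p)
      = (X k - C c) * pdiffAlong l β p
        + (β k : R) • pdiffAlong l (β - Finsupp.single k 1) p := by
  induction l with
  | nil => exact absurd hk List.not_mem_nil
  | cons i l ih =>
    obtain ⟨hil, hl⟩ := List.nodup_cons.mp hl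
    simp only [pdiffAlong_cons, Module.End.mul_apply]
    by_cases hik : i = k
    · subst hik
      rw [pdiffAlong_X_sub_C_mul_of_notMem hil, pderiv_pow_X_sub_C_mul_self,
        pdiffAlong_congr (β := β - Finsupp.single i 1) (γ := β) fun j hj => ?_]
      · simp
      · simp [show i ≠ j by rintro rfl; exact hil hj]
    · have hkl : k ∈ l := (List.mem_cons.mp hk).resolve_left (Ne.symm hik)
      rw [ih hl hkl, map_add, pderiv_pow_X_sub_C_mul_of_ne hik, map_smul]
      simp [Ne.symm hik]

end PdiffAlong

section DualPairing

variable {n : ℕ} (ξ : Fin n → ℂ)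

theorem pdiff_eq_pdiffAlong (β : Fin n →₀ ℕ) (p : MvPolynomial (Fin n) ℂ) :
    pdiff β p = pdiffAlong (List.finRange n) β p := by
  unfold pdiff
  induction List.finRange n with
  | nil => rfl
  | cons i l ih =>
    rw [List.foldr_cons, ih, pdiffAlong_cons, Module.End.mul_apply, Module.End.pow_apply]
    rfl

theorem pdiff_X_sub_C_mul (β : Fin n →₀ ℕ) (k : Fin n) (c : ℂ) (p : MvPolynomial (Fin n) ℂ) :
    pdiff β ((X k - C c) * p)
      = (X k - C c) * pdiff β p + (β k : ℂ) • pdiff (β - Finsupp.single k 1) p := by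
  simp only [pdiff_eq_pdiffAlong]
  exact pdiffAlong_X_sub_C_mul (List.nodup_finRange n) (List.mem_finRange k) β c p

theorem dapply_eq_sum (Λ p : MvPolynomial (Fin n) ℂ) :
    dapply ξ Λ p = (AddMonoidAlgebra.coeff Λ).sum fun β c => c * eval ξ (pdiff β p) := by
  rw [sum_def]; rfl

theorem dapply_add_left (Λ₁ Λ₂ p : MvPolynomial (Fin n) ℂ) :
    dapply ξ (Λ₁ + Λ₂) p = dapply ξ Λ₁ p + dapply ξ Λ₂ p := by
  simp only [dapply_eq_sum, AddMonoidAlgebra.coeff_add]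
  exact Finsupp.sum_add_index' (fun _ => zero_mul _) fun _ _ _ => add_mul _ _ _

theorem dapply_smul_left (c : ℂ) (Λ p : MvPolynomial (Fin n) ℂ) :
    dapply ξ (c • Λ) p = c • dapply ξ Λ p := by
  simp only [dapply_eq_sum, AddMonoidAlgebra.coeff_smul, smul_eq_mul]
  rw [Finsupp.sum_smul_index fun _ => zero_mul _, Finsupp.mul_sum]
  simp only [mul_assoc]

theorem dapply_add_right (Λ p q : MvPolynomial (Fin n) ℂ) :
    dapply ξ Λ (p + q) = dapply ξ Λ p + dapply ξ Λ q := by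
  simp only [dapply, pdiff_eq_pdiffAlong, map_add, mul_add, Finset.sum_add_distrib]

theorem dapply_smul_right (c : ℂ) (Λ p : MvPolynomial (Fin n) ℂ) :
    dapply ξ Λ (c • p) = c • dapply ξ Λ p := by
  simp only [dapply, pdiff_eq_pdiffAlong, map_smul, smul_eval, smul_eq_mul, Finset.mul_sum,
    mul_left_comm]

noncomputable def dualPairing : MvPolynomial (Fin n) ℂ →ₗ[ℂ] MvPolynomial (Fin n) ℂ →ₗ[ℂ] ℂ :=
  LinearMap.mk₂ ℂ (dapply ξ) (dapply_add_left ξ) (dapply_smul_left ξ) (dapply_add_right ξ)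
    (dapply_smul_right ξ)

theorem dualPairing_apply (Λ p : MvPolynomial (Fin n) ℂ) : dualPairing ξ Λ p = dapply ξ Λ p :=
  rfl

end DualPairing

section InverseSystem

variable {n : ℕ} (ξ : Fin n → ℂ)

theorem dapply_monomial (β : Fin n →₀ ℕ) (c : ℂ) (p : MvPolynomial (Fin n) ℂ) :
    dapply ξ (monomial β c) p = c * eval ξ (pdiff β p) := by
  rw [dapply_eq_sum]
  exact Finsupp.sum_single_index (zero_mul _)

theorem dapply_pderiv (k : Fin n) (Λ p : MvPolynomial (Fin n) ℂ) :
    dapply ξ (pderiv k Λ) p = dapply ξ Λ ((X k - C (ξ k)) * p) := by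
  induction Λ using MvPolynomial.induction_on' with
  | monomial β c =>
    rw [pderiv_monomial, dapply_monomial, dapply_monomial, pdiff_X_sub_C_mul, map_add, map_mul,
      map_sub, eval_X, eval_C, sub_self, zero_mul, zero_add, smul_eval]
    ring
  | add Λ₁ Λ₂ h₁ h₂ => rw [map_add, dapply_add_left, dapply_add_left, h₁, h₂]

theorem dapply_X_mul (k : Fin n) (Λ p : MvPolynomial (Fin n) ℂ) :
    dapply ξ Λ (X k * p) = dapply ξ (pderiv k Λ) p + ξ k * dapply ξ Λ p := by
  rw [dapply_pderiv, ← smul_eq_mul (ξ k), ← dapply_smul_right, ← dapply_add_right, smul_eq_C_mul]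
  congr 1
  ring

theorem dapply_eq_zero_of_mem_span {s : Set (MvPolynomial (Fin n) ℂ)}
    {p : MvPolynomial (Fin n) ℂ} (hs : ∀ Λ ∈ s, dapply ξ Λ p = 0)
    {Λ : MvPolynomial (Fin n) ℂ} (hΛ : Λ ∈ Submodule.span ℂ s) : dapply ξ Λ p = 0 :=
  (Submodule.span_le (p := LinearMap.ker ((dualPairing ξ).flip p))).2 hs hΛ

theorem dapply_sub_sum_dapply_smul_eq_zero {ι : Type*} [Fintype ι] [DecidableEq ι]
    {Λs b : ι → MvPolynomial (Fin n) ℂ}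
    (hdual : ∀ i j, dapply ξ (Λs i) (b j) = if i = j then 1 else 0)
    (g : MvPolynomial (Fin n) ℂ) (j : ι) :
    dapply ξ (Λs j) (g - ∑ i, dapply ξ (Λs i) g • b i) = 0 := by
  simp only [← dualPairing_apply, map_sub, map_sum, map_smul]
  simp [dualPairing_apply, hdual]

noncomputable def annihilatorIdeal (D : Submodule ℂ (MvPolynomial (Fin n) ℂ))
    (hD : ∀ Λ ∈ D, ∀ k, pderiv k Λ ∈ D) : Ideal (MvPolynomial (Fin n) ℂ) where
  carrier := {p | ∀ Λ ∈ D, dapply ξ Λ p = 0}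
  zero_mem' Λ _ := by rw [← dualPairing_apply, map_zero]
  add_mem' hp hq Λ hΛ := by rw [dapply_add_right, hp Λ hΛ, hq Λ hΛ, add_zero]
  smul_mem' g p hp := by
    induction g using MvPolynomial.induction_on generalizing p with
    | C a =>
      intro Λ hΛ
      rw [smul_eq_mul, ← smul_eq_C_mul, dapply_smul_right, hp Λ hΛ, smul_zero]
    | add g₁ g₂ h₁ h₂ =>
      intro Λ hΛ
      rw [smul_eq_mul, add_mul, dapply_add_right, ← smul_eq_mul, ← smul_eq_mul, h₁ p hp Λ hΛ,
        h₂ p hp Λ hΛ, add_zero]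
    | mul_X g k h =>
      have hXp : ∀ Λ ∈ D, dapply ξ Λ (X k * p) = 0 := fun Λ hΛ => by
        rw [dapply_X_mul, hp _ (hD Λ hΛ k), hp Λ hΛ, mul_zero, add_zero]
      simpa only [smul_eq_mul, mul_assoc] using h (X k * p) hXp

theorem mem_of_annihilates_of_complete {I : Ideal (MvPolynomial (Fin n) ℂ)}
    {D : Submodule ℂ (MvPolynomial (Fin n) ℂ)}
    (hcomplete : ∀ Δ : MvPolynomial (Fin n) ℂ, (∀ k, pderiv k Δ ∈ D) →
      (∀ p ∈ I, dapply ξ Δ p = 0) → Δ ∈ D)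
    {Δ : MvPolynomial (Fin n) ℂ} (hΔ : ∀ p ∈ I, dapply ξ Δ p = 0) : Δ ∈ D := by
  induction hd : Δ.totalDegree using Nat.strong_induction_on generalizing Δ with
  | _ d ih =>
    refine hcomplete Δ (fun k => ?_) hΔ
    by_cases h0 : pderiv k Δ = 0
    · rw [h0]
      exact D.zero_mem
    · refine ih _ (hd ▸ totalDegree_pderiv_lt h0) (fun p hp => ?_) rfl
      rw [dapply_pderiv]
      exact hΔ _ (I.mul_mem_left _ hp)

end InverseSystem

theorem statement15_general {n N m : ℕ} (ξs : Fin n → ℂ)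
    (f : Fin N → MvPolynomial (Fin n) ℂ)
    (β : Fin m → (Fin n →₀ ℕ))
    (Λs : Fin m → MvPolynomial (Fin n) ℂ)
    (hdual : ∀ i j, dapply ξs (Λs i) (xpow ξs (β j)) = if i = j then 1 else 0)
    (hstab : ∀ Λ ∈ Submodule.span ℂ (Set.range Λs), ∀ k : Fin n,
        pderiv k Λ ∈ Submodule.span ℂ (Set.range Λs))
    (fPert : Fin N → MvPolynomial (Fin n) ℂ)
    (hfPert : ∀ i, fPert i = f i - ∑ j, dapply ξs (Λs j) (f i) • xpow ξs (β j)) :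
    (∀ (i : Fin N) (j : Fin m), dapply ξs (Λs j) (fPert i) = 0) ∧
    (∀ Λ ∈ Submodule.span ℂ (Set.range Λs), ∀ p ∈ Ideal.span (Set.range fPert),
      dapply ξs Λ p = 0) ∧
    ((∀ Δ : MvPolynomial (Fin n) ℂ,
        (∀ k : Fin n, pderiv k Δ ∈ Submodule.span ℂ (Set.range Λs)) →
        (∀ i : Fin N, dapply ξs Δ (fPert i) = 0) →
        Δ ∈ Submodule.span ℂ (Set.range Λs)) →
      (↑(Submodule.span ℂ (Set.range Λs)) : Set (MvPolynomial (Fin n) ℂ)) =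
        {Λ | ∀ p ∈ Ideal.span (Set.range fPert), dapply ξs Λ p = 0}) := by
  have hpert : ∀ i j, dapply ξs (Λs j) (fPert i) = 0 := fun i j => by
    rw [hfPert i]
    exact dapply_sub_sum_dapply_smul_eq_zero ξs hdual (f i) j
  have hideal : Ideal.span (Set.range fPert) ≤ annihilatorIdeal ξs _ hstab := by
    rw [Ideal.span_le]
    rintro _ ⟨i, rfl⟩ Λ hΛ
    exact dapply_eq_zero_of_mem_span ξs (by rintro _ ⟨j, rfl⟩; exact hpert i j) hΛ
  refine ⟨hpert, fun Λ hΛ p hp => hideal hp Λ hΛ, fun hcomplete => ?_⟩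
  ext Δ
  refine ⟨fun hΔ p hp => hideal hp Δ hΔ, fun hΔ => ?_⟩
  refine mem_of_annihilates_of_complete ξs (fun Δ' hder hann => ?_) hΔ
  exact hcomplete Δ' hder fun i => hann _ (Ideal.subset_span ⟨i, rfl⟩)

/-- the perturbed system f_ε* = f − ε*·B_{ξ*} with ε*_{i,j} = Λ*_j(f_i)
is annihilated by the dual space D* = span Λ*; if moreover D* is complete for f_ε* at
ξ*, then D* is exactly the inverse system of f_ε* at ξ*, so ξ* is a root of
multiplicity exactly μ with inverse system D*. -/
theorem statement15 {n N m : ℕ} (hm : 0 < m) (ξs : Fin n → ℂ)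
    (f : Fin N → MvPolynomial (Fin n) ℂ)
    (β : Fin m → (Fin n →₀ ℕ)) (hβ0 : β ⟨0, hm⟩ = 0)
    (hdiv : ∀ (i : Fin m) (k : Fin n), β i k ≠ 0 → ∃ j, β j = β i - Finsupp.single k 1)
    (Λs : Fin m → MvPolynomial (Fin n) ℂ) (hΛ0 : Λs ⟨0, hm⟩ = 1)
    (hdual : ∀ i j, dapply ξs (Λs i) (xpow ξs (β j)) = if i = j then 1 else 0)
    (hstab : ∀ Λ ∈ Submodule.span ℂ (Set.range Λs), ∀ k : Fin n,
        pderiv k Λ ∈ Submodule.span ℂ (Set.range Λs))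
    (fPert : Fin N → MvPolynomial (Fin n) ℂ)
    (hfPert : ∀ i, fPert i = f i - ∑ j, dapply ξs (Λs j) (f i) • xpow ξs (β j)) :
    (∀ (i : Fin N) (j : Fin m), dapply ξs (Λs j) (fPert i) = 0) ∧
    (∀ Λ ∈ Submodule.span ℂ (Set.range Λs), ∀ p ∈ Ideal.span (Set.range fPert),
      dapply ξs Λ p = 0) ∧
    ((∀ Δ : MvPolynomial (Fin n) ℂ,
        (∀ k : Fin n, pderiv k Δ ∈ Submodule.span ℂ (Set.range Λs)) →
        (∀ i : Fin N, dapply ξs Δ (fPert i) = 0) →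
        Δ ∈ Submodule.span ℂ (Set.range Λs)) →
      (↑(Submodule.span ℂ (Set.range Λs)) : Set (MvPolynomial (Fin n) ℂ)) =
        {Λ | ∀ p ∈ Ideal.span (Set.range fPert), dapply ξs Λ p = 0}) :=
  statement15_general ξs f β Λs hdual hstab fPert hfPert
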